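/- Context split is associative in the following sense: if Π₁ ∘ Π₂₃ = Π and Π₂ ∘ Π₃ = Π₂₃, then there exists Π₁₂ such that Π₁ ∘ Π₂ = Π₁₂ and Π₁₂ ∘ Π₃ = Π. -/
import Mathlib


/-- Qualifiers `q ::= li | un`. -/
inductive Qual : Type
  | li
  | un
deriving DecidableEq

/-- Base pretypes (`int`, `bool`, `array`, ...), modelled as names. -/
abbrev BTy := String

/-- Types `T ::= q P` with pretypes `P ::= B | ⟨T,...,T⟩ | T → T`
(the outer qualifier is stored in each constructor). -/
inductive Ty : Type
  | base : Qual → BTy → Ty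
  | tuple : Qual → List Ty → Ty
  | arrow : Qual → Ty → Ty → Ty

/-- The qualifier of a type `q P`. -/
def Ty.q : Ty → Qual
  | .base q _ => q
  | .tuple q _ => q
  | .arrow q _ _ => q

/-- Pseudotypes `Υ ::= T | hi B`. -/
inductive PTy : Type
  | ty : Ty → PTy
  | hi : BTy → PTy

/-- A pseudotype is linear iff it is a type whose qualifier is `li`. -/
def PTy.isLin : PTy → Bool
  | .ty T => T.q = Qual.li
  | .hi _ => false

/-- Type contexts: lists of variable–pseudotype pairs (head = most recent binding). -/
abbrev Ctx := List (String × PTy)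

/-- The context split relation `Γ₁ ∘ Γ₂ = Γ`: non-linear bindings are shared,
linear bindings go to exactly one component. -/
inductive Split : Ctx → Ctx → Ctx → Prop
  | nil : Split [] [] []
  | both {Γ₁ Γ₂ Γ : Ctx} {x : String} {υ : PTy} :
      υ.isLin = false → Split Γ₁ Γ₂ Γ →
      Split ((x, υ) :: Γ₁) ((x, υ) :: Γ₂) ((x, υ) :: Γ)
  | left {Γ₁ Γ₂ Γ : Ctx} {x : String} {υ : PTy} :
      υ.isLin = true → Split Γ₁ Γ₂ Γ →
      Split ((x, υ) :: Γ₁) Γ₂ ((x, υ) :: Γ)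
  | right {Γ₁ Γ₂ Γ : Ctx} {x : String} {υ : PTy} :
      υ.isLin = true → Split Γ₁ Γ₂ Γ →
      Split Γ₁ ((x, υ) :: Γ₂) ((x, υ) :: Γ)


/-- Associativity of context split: if `Γ₁ ∘ Γ₂₃ = Γ` and `Γ₂ ∘ Γ₃ = Γ₂₃`, then
there exists `Γ₁₂` with `Γ₁ ∘ Γ₂ = Γ₁₂` and `Γ₁₂ ∘ Γ₃ = Γ`. -/
theorem split_assoc {Γ₁ Γ₂ Γ₃ Γ₂₃ Γ : Ctx}
    (h1 : Split Γ₁ Γ₂₃ Γ) (h2 : Split Γ₂ Γ₃ Γ₂₃) :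
    ∃ Γ₁₂ : Ctx, Split Γ₁ Γ₂ Γ₁₂ ∧ Split Γ₁₂ Γ₃ Γ := by
  induction h1 generalizing Γ₂ Γ₃ with
  | nil => cases h2; exact ⟨[], .nil, .nil⟩
  | both h s ih =>
    cases h2 with
    | both h' s' =>
      obtain ⟨Δ, a, b⟩ := ih s'
      exact ⟨_ :: Δ, .both h a, .both h b⟩
    | left h' s' => simp_all
    | right h' s' => simp_all
  | left h s ih =>
    obtain ⟨Δ, a, b⟩ := ih h2
    exact ⟨_ :: Δ, .left h a, .left h b⟩
  | right h s ih =>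
    cases h2 with
    | both h' s' => simp_all
    | left h' s' =>
      obtain ⟨Δ, a, b⟩ := ih s'
      exact ⟨_ :: Δ, .right h a, .left h b⟩
    | right h' s' =>
      obtain ⟨Δ, a, b⟩ := ih s'
      exact ⟨Δ, a, .right h b⟩
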